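/- arXiv:1502.01690 — 3 statements merged into one kernel-verified Lean document; each statement's English description precedes it below -/
import Mathlib

section
/- Let m, n ≥ 1 be integers. If there exists a homomorphism of unital ℂ-algebras from the matrix algebra M_m(ℂ) to the matrix algebra M_n(ℂ), then m divides n and there is an isomorphism of unital ℂ-algebras M_n(ℂ) ≅ M_m(ℂ) ⊗_ℂ M_{n/m}(ℂ). -/
/-!
Since `E_ii = E_ij E_ji` and `E_jj = E_ji E_ij`, the idempotents `f(E_ii)` all have the same
trace `r`, a rank, and summing over `i` gives `n = m r`. The Kronecker product then identifies
`M_{m r}` with `M_m ⊗ M_r`.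
-/

open TensorProduct

namespace Matrix

variable {K R ι κ : Type*} [Fintype ι] [DecidableEq ι] [Fintype κ] [DecidableEq κ]

theorem trace_eq_finrank_range_of_isIdempotentElem [Field K] {A : Matrix κ κ K}
    (hA : IsIdempotentElem A) : A.trace = Module.finrank K (LinearMap.range (toLin' A)) := by
  rw [← trace_toLin'_eq]
  exact (LinearMap.IsIdempotentElem.isProj_range _ (hA.map (toLinAlgEquiv' (R := K)))).trace

theorem trace_algHom_single_self [CommSemiring R] (f : Matrix ι ι R →ₐ[R] Matrix κ κ R)
    (i j : ι) : (f (single i i 1)).trace = (f (single j j 1)).trace := by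
  have hi : single i i (1 : R) = single i j 1 * single j i 1 := by simp
  have hj : single j j (1 : R) = single j i 1 * single i j 1 := by simp
  rw [hi, hj, map_mul, map_mul, trace_mul_comm]

theorem card_mul_trace_algHom_single_self [CommSemiring R] (f : Matrix ι ι R →ₐ[R] Matrix κ κ R)
    (i : ι) : Fintype.card ι * (f (single i i 1)).trace = Fintype.card κ := calc
  _ = ∑ j : ι, (f (single j j 1)).trace := by
    simp [trace_algHom_single_self f _ i]
  _ = (f 1).trace := by rw [← sum_single_one, map_sum, trace_sum]
  _ = Fintype.card κ := by rw [map_one, trace_one]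

theorem card_dvd_card_of_algHom [Field K] [CharZero K] (f : Matrix ι ι K →ₐ[K] Matrix κ κ K) :
    Fintype.card ι ∣ Fintype.card κ := by
  cases isEmpty_or_nonempty ι with
  | inl _ =>
    have hκ : (Fintype.card κ : K) = 0 := by
      rw [← trace_one, ← map_one f, Subsingleton.elim (1 : Matrix ι ι K) 0, map_zero, trace_zero]
    simp [Nat.cast_eq_zero.mp hκ]
  | inr hι =>
    obtain ⟨i⟩ := hι
    have hidem : IsIdempotentElem (f (single i i 1)) :=
      IsIdempotentElem.map (by simp [IsIdempotentElem]) f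
    refine ⟨Module.finrank K (LinearMap.range (toLin' (f (single i i 1)))), ?_⟩
    exact_mod_cast (card_mul_trace_algHom_single_self f i).symm.trans
      (congrArg _ (trace_eq_finrank_range_of_isIdempotentElem hidem))

end Matrix

theorem matrix_algHom_factorization_general (m n : ℕ)
    (h : Nonempty (Matrix (Fin m) (Fin m) ℂ →ₐ[ℂ] Matrix (Fin n) (Fin n) ℂ)) :
    m ∣ n ∧
      Nonempty (Matrix (Fin n) (Fin n) ℂ ≃ₐ[ℂ]
        Matrix (Fin m) (Fin m) ℂ ⊗[ℂ] Matrix (Fin (n / m)) (Fin (n / m)) ℂ) := by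
  obtain ⟨f⟩ := h
  have hdvd : m ∣ n := by simpa using Matrix.card_dvd_card_of_algHom f
  let e : Fin n ≃ Fin m × Fin (n / m) :=
    (finCongr (Nat.mul_div_cancel' hdvd).symm).trans finProdFinEquiv.symm
  exact ⟨hdvd, ⟨(Matrix.reindexAlgEquiv ℂ ℂ e).trans (Matrix.kroneckerAlgEquiv _ _ ℂ).symm⟩⟩

/-- If there exists a homomorphism of unital ℂ-algebras `M_m(ℂ) → M_n(ℂ)` (with `m, n ≥ 1`),
then `m` divides `n` and `M_n(ℂ) ≅ M_m(ℂ) ⊗[ℂ] M_{n/m}(ℂ)` as unital ℂ-algebras. -/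
theorem matrix_algHom_factorization (m n : ℕ) (hm : 1 ≤ m) (hn : 1 ≤ n)
    (h : Nonempty (Matrix (Fin m) (Fin m) ℂ →ₐ[ℂ] Matrix (Fin n) (Fin n) ℂ)) :
    m ∣ n ∧
      Nonempty (Matrix (Fin n) (Fin n) ℂ ≃ₐ[ℂ]
        Matrix (Fin m) (Fin m) ℂ ⊗[ℂ] Matrix (Fin (n / m)) (Fin (n / m)) ℂ) :=
  matrix_algHom_factorization_general m n h
end

section
/- Let R and S be unital rings. If R and S are Morita equivalent, i.e. the category of left R-modules is equivalent to the category of left S-modules, then the centers Z(R) and Z(S) are isomorphic as rings. -/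
/-!
The center of a preadditive category, the ring `End (𝟭 C)` of natural endomorphisms of the
identity functor, is transported along any equivalence, which is automatically additive.
For `ModuleCat R` this ring is `Z(R)`: by naturality along `r ↦ r • m`, a natural endomorphism
`η` is multiplication by `η_R(1)`, and `R`-linearity of `η_R` forces that scalar to be central.
-/

open CategoryTheory

universe u

namespace CategoryTheory.CatCenter

variable {C D : Type*} [Category C] [Category D] [Preadditive C] [Preadditive D]

theorem localizationRingHom_bijective (L : C ⥤ D) (W : MorphismProperty C) [L.IsLocalization W]
    [L.Additive] [L.Full] [L.Faithful] : Function.Bijective (localizationRingHom L W) := by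
  constructor
  · intro r s h
    ext X
    apply L.map_injective
    rw [← localization_app r L W, ← localization_app s L W]
    exact congr_arg (fun t : CatCenter D => t.app (L.obj X)) h
  · intro t
    let r : CatCenter C :=
      { app X := L.preimage (t.app (L.obj X))
        naturality X Y f := L.map_injective (by simpa using t.naturality (L.map f)) }
    exact ⟨r, ext_of_localization L W _ _ fun X =>
      (localization_app r L W X).trans (L.map_preimage _)⟩

/-- An equivalence is a localization functor at the isomorphisms, so central elements can be
pushed along it by `CatCenter.localizationRingHom`. -/
noncomputable def _root_.CategoryTheory.Equivalence.catCenterRingEquiv (e : C ≌ D)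
    [e.functor.Additive] : CatCenter C ≃+* CatCenter D :=
  have := Functor.IsLocalization.of_isEquivalence e.functor _ le_rfl
  RingEquiv.ofBijective _ (localizationRingHom_bijective e.functor
    (MorphismProperty.isomorphisms C))

end CategoryTheory.CatCenter

namespace ModuleCat

variable {R : Type u} [Ring R]

theorem catCenter_app_apply (η : CatCenter (ModuleCat.{u} R)) (M : ModuleCat.{u} R) (m : M) :
    η.app M m = η.app (of R R) 1 • m := by
  simpa using ConcreteCategory.congr_hom
    (η.naturality (ofHom (LinearMap.toSpanSingleton R M m))) 1

theorem catCenter_app_one_mem_center (η : CatCenter (ModuleCat.{u} R)) :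
    η.app (of R R) 1 ∈ Subring.center R := by
  refine Subring.mem_center_iff.mpr fun a => ?_
  calc a * η.app (of R R) 1
      _ = η.app (of R R) (a • 1) := by simpa using ((η.app (of R R)).hom.map_smul a 1).symm
      _ = η.app (of R R) 1 * a := by rw [smul_eq_mul, mul_one, catCenter_app_apply, smul_eq_mul]

open scoped ModuleCat.Algebra

theorem toCatCenter_bijective :
    Function.Bijective (Linear.toCatCenter (Subring.center R) (ModuleCat.{u} R)) := by
  constructor
  · intro z w h
    have h1 := congr_arg (fun η : CatCenter (ModuleCat.{u} R) => η.app (of R R) (1 : R)) h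
    change (z : R) • (1 : R) = (w : R) • 1 at h1
    simpa using h1
  · intro η
    refine ⟨⟨_, catCenter_app_one_mem_center η⟩, ?_⟩
    ext M m
    exact (catCenter_app_apply η M m).symm

noncomputable def centerRingEquivCatCenter : Subring.center R ≃+* CatCenter (ModuleCat.{u} R) :=
  RingEquiv.ofBijective _ toCatCenter_bijective

end ModuleCat

/-- Morita equivalent unital rings have isomorphic centers. -/
theorem morita_center_iso (R S : Type) [Ring R] [Ring S]
    (h : Nonempty (ModuleCat.{0} R ≌ ModuleCat.{0} S)) :
    Nonempty (Subring.center R ≃+* Subring.center S) := by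
  obtain ⟨e⟩ := h
  have := e.functor.additive_of_preserves_binary_products
  exact ⟨ModuleCat.centerRingEquivCatCenter.trans
    (e.catCenterRingEquiv.trans ModuleCat.centerRingEquivCatCenter.symm)⟩
end

section
/- Let C and D be braided monoidal categories, let F : D × C ⥤ C be a braided monoidal functor on the product braided monoidal category D × C, and suppose there is a monoidal natural isomorphism between the functor c ↦ F(1_D, c) and the identity functor of C. Then for every object d of D, the object x = F(d, 1_C) is transparent in C: for every object y of C, the double braiding β_{y,x} ∘ β_{x,y} : x ⊗ y → x ⊗ y equals the identity of x ⊗ y. -/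
open CategoryTheory MonoidalCategory Functor.LaxMonoidal

/-!
In `D × C` the double braiding of `(d, 𝟙_ C)` with `(𝟙_ D, y)` is componentwise a double
braiding with a unit object, hence the identity. A braided strong monoidal functor intertwines
double braidings up to the invertible `μ`, so `F.obj (d, 𝟙_ C)` and `F.obj (𝟙_ D, y)` have trivial
double braiding, and by naturality of the braiding this transfers along
`F.obj (𝟙_ D, y) ≅ y`.
-/

section

variable (C D : Type*) [Category C] [Category D] [MonoidalCategory C] [MonoidalCategory D]

/-- The functor `C ⥤ D × C`, `c ↦ (𝟙_ D, c)`, is lax monoidal (in fact strong monoidal). -/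
instance Prod.sectR_laxMonoidal : (Prod.sectR (𝟙_ D) C).LaxMonoidal where
  ε := 𝟙 (𝟙_ (D × C))
  μ X Y := ((λ_ (𝟙_ D)).hom, 𝟙 (X ⊗ Y))
  μ_natural_left f X' := by
    refine Prod.ext ?_ ?_ <;> simp [Prod.sectR, Prod.mkHom]
  μ_natural_right X' f := by
    refine Prod.ext ?_ ?_ <;> simp [Prod.sectR, Prod.mkHom]
  associativity X Y Z := by
    refine Prod.ext ?_ ?_
    · dsimp
      simp [Prod.sectR, Prod.mkHom]
      monoidal
    · dsimp
      simp [Prod.sectR, Prod.mkHom]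
  left_unitality X := by
    refine Prod.ext ?_ ?_ <;> simp [Prod.sectR, Prod.mkHom, MonoidalCategory.unitors_equal]
  right_unitality X := by
    refine Prod.ext ?_ ?_
    · dsimp
      simp [Prod.sectR, Prod.mkHom, MonoidalCategory.unitors_equal]
    · dsimp
      simp [Prod.sectR, Prod.mkHom]

end

namespace CategoryTheory

instance BraidedCategory.prod (C D : Type*) [Category C] [Category D]
    [MonoidalCategory C] [MonoidalCategory D] [BraidedCategory C] [BraidedCategory D] :
    BraidedCategory (C × D) where
  braiding X Y := Iso.prod (β_ X.1 Y.1) (β_ X.2 Y.2)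
  braiding_naturality_right X Y Z f := by ext <;> simp
  braiding_naturality_left f Z := by ext <;> simp
  hexagon_forward X Y Z := by ext <;> simp
  hexagon_reverse X Y Z := by ext <;> simp

section

variable {C : Type*} [Category C] [MonoidalCategory C] [BraidedCategory C]

theorem doubleBraiding_tensorUnit_right (X : C) :
    (β_ X (𝟙_ C)).hom ≫ (β_ (𝟙_ C) X).hom = 𝟙 (X ⊗ 𝟙_ C) := by
  simp [braiding_tensorUnit_left, braiding_tensorUnit_right]

theorem doubleBraiding_tensorUnit_left (X : C) :
    (β_ (𝟙_ C) X).hom ≫ (β_ X (𝟙_ C)).hom = 𝟙 (𝟙_ C ⊗ X) := by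
  simp [braiding_tensorUnit_left, braiding_tensorUnit_right]

theorem whiskerLeft_doubleBraiding (X : C) {Y Z : C} (f : Y ⟶ Z) :
    X ◁ f ≫ (β_ X Z).hom ≫ (β_ Z X).hom = ((β_ X Y).hom ≫ (β_ Y X).hom) ≫ X ◁ f := by
  simp only [BraidedCategory.braiding_naturality_right_assoc,
    BraidedCategory.braiding_naturality_left, Category.assoc]

theorem doubleBraiding_eq_id_of_iso (X : C) {Y Z : C} (i : Y ≅ Z)
    (h : (β_ X Y).hom ≫ (β_ Y X).hom = 𝟙 (X ⊗ Y)) :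
    (β_ X Z).hom ≫ (β_ Z X).hom = 𝟙 (X ⊗ Z) := by
  rw [← cancel_epi (X ◁ i.hom), whiskerLeft_doubleBraiding, h, Category.id_comp,
    Category.comp_id]

end

section

variable {C D : Type*} [Category C] [Category D] [MonoidalCategory C] [MonoidalCategory D]
  [BraidedCategory C] [BraidedCategory D]

theorem Functor.LaxBraided.doubleBraiding_comp_μ (F : C ⥤ D) [F.LaxBraided] (X Y : C) :
    ((β_ (F.obj X) (F.obj Y)).hom ≫ (β_ (F.obj Y) (F.obj X)).hom) ≫ μ F X Y =
      μ F X Y ≫ F.map ((β_ X Y).hom ≫ (β_ Y X).hom) := by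
  rw [Category.assoc, ← Functor.LaxBraided.braided, ← Category.assoc,
    ← Functor.LaxBraided.braided, Category.assoc, F.map_comp]

theorem Functor.Braided.doubleBraiding_obj_eq_id (F : C ⥤ D) [F.Braided] {X Y : C}
    (h : (β_ X Y).hom ≫ (β_ Y X).hom = 𝟙 (X ⊗ Y)) :
    (β_ (F.obj X) (F.obj Y)).hom ≫ (β_ (F.obj Y) (F.obj X)).hom = 𝟙 (F.obj X ⊗ F.obj Y) := by
  rw [← cancel_mono (μ F X Y), Functor.LaxBraided.doubleBraiding_comp_μ, h, F.map_id,
    Category.comp_id, Category.id_comp]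

end

end CategoryTheory

theorem braided_action_lands_in_centralizer_general
    {C D : Type*} [Category C] [Category D] [MonoidalCategory C] [MonoidalCategory D]
    [BraidedCategory C] [BraidedCategory D]
    (F : (D × C) ⥤ C) [F.Monoidal]
    (hbraided : ∀ X Y : D × C,
      μ F X Y ≫ F.map (((β_ X.1 Y.1).hom, (β_ X.2 Y.2).hom) : X ⊗ Y ⟶ Y ⊗ X) =
        (β_ (F.obj X) (F.obj Y)).hom ≫ μ F Y X)
    (e : Prod.sectR (𝟙_ D) C ⋙ F ≅ 𝟭 C) :
    ∀ (d : D) (y : C),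
      (β_ (F.obj (d, 𝟙_ C)) y).hom ≫ (β_ y (F.obj (d, 𝟙_ C))).hom =
        𝟙 (F.obj (d, 𝟙_ C) ⊗ y) := by
  intro d y
  let _ : F.Braided := { braided := hbraided }
  have hunit : (β_ ((d, 𝟙_ C) : D × C) (𝟙_ D, y)).hom ≫ (β_ ((𝟙_ D, y) : D × C) (d, 𝟙_ C)).hom =
      𝟙 _ := by
    ext
    · exact doubleBraiding_tensorUnit_right d
    · exact doubleBraiding_tensorUnit_left y
  exact doubleBraiding_eq_id_of_iso _ (e.app y) (Functor.Braided.doubleBraiding_obj_eq_id F hunit)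

/-- If `F : D × C ⥤ C` is a braided monoidal functor on the product braided monoidal
category (the braided condition being stated componentwise, the braiding of `D × C` being
componentwise) such that the functor `c ↦ F (𝟙_ D, c)` is monoidally naturally isomorphic
to the identity functor of `C`, then for every `d : D` the object `F (d, 𝟙_ C)` is
transparent in `C` : all double braidings with it are identities. -/
theorem braided_action_lands_in_centralizer
    {C D : Type*} [Category C] [Category D] [MonoidalCategory C] [MonoidalCategory D]
    [BraidedCategory C] [BraidedCategory D]
    (F : (D × C) ⥤ C) [F.Monoidal]
    (hbraided : ∀ X Y : D × C,
      μ F X Y ≫ F.map (((β_ X.1 Y.1).hom, (β_ X.2 Y.2).hom) : X ⊗ Y ⟶ Y ⊗ X) =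
        (β_ (F.obj X) (F.obj Y)).hom ≫ μ F Y X)
    (e : Prod.sectR (𝟙_ D) C ⋙ F ≅ 𝟭 C) [NatTrans.IsMonoidal e.hom] :
    ∀ (d : D) (y : C),
      (β_ (F.obj (d, 𝟙_ C)) y).hom ≫ (β_ y (F.obj (d, 𝟙_ C))).hom =
        𝟙 (F.obj (d, 𝟙_ C) ⊗ y) :=
  braided_action_lands_in_centralizer_general F hbraided e
end
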